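/- For any m×m complex matrices A and B, the function t ↦ tr(exp(A + t•B)) from ℝ to ℂ has derivative tr(exp(A)·B) at t = 0. -/

import Mathlib

/-!
Differentiate the exponential series term by term. For a continuous linear map `τ` with
`τ (a * b) = τ (b * a)`, cyclicity collapses the `n` terms of the derivative of `y ↦ τ (y ^ n)`
in direction `h` to `n τ (x ^ (n - 1) * h)`, so the differentiated series of `τ ∘ exp` is
`τ (exp x * h)`. On the ball of radius `‖x‖ + 1` these derivatives are bounded by
`‖τ‖ n r ^ (n - 1) / n!`, a summable sequence, which justifies the termwise differentiation.
-/

open NormedSpace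

open scoped Nat

namespace ContinuousLinearMap

variable {𝕂 𝔸 F : Type*} [NontriviallyNormedField 𝕂] [NormedRing 𝔸] [NormedAlgebra 𝕂 𝔸]
  [NormedAddCommGroup F] [NormedSpace 𝕂 F]

noncomputable def compMul (τ : 𝔸 →L[𝕂] F) : 𝔸 →L[𝕂] 𝔸 →L[𝕂] F :=
  (compL 𝕂 𝔸 𝔸 F τ).comp (mul 𝕂 𝔸)

@[simp]
theorem compMul_apply (τ : 𝔸 →L[𝕂] F) (a h : 𝔸) : τ.compMul a h = τ (a * h) := rfl

theorem norm_compMul_pow_le (τ : 𝔸 →L[𝕂] F) (y : 𝔸) (k : ℕ) :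
    ‖τ.compMul (y ^ k)‖ ≤ ‖τ‖ * ‖y‖ ^ k := by
  rcases k.eq_zero_or_pos with rfl | hk
  · have : τ.compMul 1 = τ := by ext; simp
    simp [this]
  · calc ‖τ.compMul (y ^ k)‖ ≤ ‖τ‖ * ‖mul 𝕂 𝔸 (y ^ k)‖ := opNorm_comp_le _ _
      _ ≤ ‖τ‖ * ‖y‖ ^ k := by
        gcongr
        exact (opNorm_mul_apply_le _ _ _).trans (norm_pow_le' y hk)

theorem hasFDerivAt_pow_of_cyclic (τ : 𝔸 →L[𝕂] F) (hτ : ∀ a b, τ (a * b) = τ (b * a))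
    (n : ℕ) (x : 𝔸) :
    HasFDerivAt (fun y => τ (y ^ n)) ((n : 𝕂) • τ.compMul (x ^ (n - 1))) x := by
  refine (τ.hasFDerivAt.comp x (hasFDerivAt_pow' n)).congr_fderiv ?_
  ext h
  have term : ∀ i ∈ Finset.range n, τ (x ^ (n - 1 - i) * h * x ^ i) = τ (x ^ (n - 1) * h) := by
    intro i hi
    rw [hτ, ← mul_assoc, ← pow_add, Nat.add_sub_cancel' (by grind)]
  simp [Finset.sum_congr rfl term, Nat.cast_smul_eq_nsmul]

end ContinuousLinearMap

theorem Real.summable_natCast_mul_pow_pred_div_factorial (r : ℝ) :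
    Summable fun n : ℕ => n * r ^ (n - 1) / n ! := by
  rw [← summable_nat_add_iff 1]
  refine (Real.summable_pow_div_factorial r).congr fun n => ?_
  rw [Nat.add_sub_cancel, Nat.factorial_succ]
  push_cast
  rw [mul_div_mul_left _ _ (by positivity)]

theorem NormedSpace.exp_series_deriv_hasSum_exp {𝕂 𝔸 : Type*} [NontriviallyNormedField 𝕂]
    [CharZero 𝕂] [ContinuousSMul ℚ 𝕂] [NormedRing 𝔸] [NormedAlgebra 𝕂 𝔸] [CompleteSpace 𝔸]
    (x : 𝔸) : HasSum (fun n => ((n !⁻¹ : 𝕂) * n) • x ^ (n - 1)) (exp x) := by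
  have coeff (n : ℕ) : (((n + 1) ! : 𝕂)⁻¹ * ((n : 𝕂) + 1)) = (n ! : 𝕂)⁻¹ := by
    rw [Nat.factorial_succ]
    push_cast
    field_simp
  rw [← hasSum_nat_add_iff' 1]
  simpa [coeff] using exp_series_hasSum_exp' (𝕂 := 𝕂) x

theorem ContinuousLinearMap.hasFDerivAt_exp_of_cyclic {𝕂 𝔸 F : Type*} [RCLike 𝕂] [NormedRing 𝔸]
    [NormedAlgebra 𝕂 𝔸] [CompleteSpace 𝔸] [NormedAddCommGroup F] [NormedSpace 𝕂 F]
    [CompleteSpace F] (τ : 𝔸 →L[𝕂] F) (hτ : ∀ a b, τ (a * b) = τ (b * a)) (x : 𝔸) :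
    HasFDerivAt (fun y => τ (exp y)) (τ.compMul (exp x)) x := by
  -- the real structure makes balls convex, hence preconnected
  let _ : NormedSpace ℝ 𝔸 := NormedSpace.restrictScalars ℝ 𝕂 𝔸
  set r := ‖x‖ + 1
  have hx : x ∈ Metric.ball 0 r := by simp [r]
  have term : ∀ (n : ℕ) y, y ∈ Metric.ball (0 : 𝔸) r →
      HasFDerivAt (fun y => (n !⁻¹ : 𝕂) • τ (y ^ n))
        (τ.compMul (((n !⁻¹ : 𝕂) * n) • y ^ (n - 1))) y := fun n y _ =>
    ((τ.hasFDerivAt_pow_of_cyclic hτ n y).const_smul _).congr_fderiv (by rw [map_smul, mul_smul])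
  have bound : ∀ (n : ℕ) y, y ∈ Metric.ball (0 : 𝔸) r →
      ‖τ.compMul (((n !⁻¹ : 𝕂) * n) • y ^ (n - 1))‖ ≤ ‖τ‖ * (n * r ^ (n - 1) / n !) := by
    intro n y hy
    calc _ ≤ ((n ! : ℝ)⁻¹ * n) * (‖τ‖ * r ^ (n - 1)) := by
          rw [map_smul, norm_smul]
          simp only [norm_mul, norm_inv, RCLike.norm_natCast]
          gcongr
          exact (τ.norm_compMul_pow_le y _).trans (by gcongr; exact (mem_ball_zero_iff.mp hy).le)
      _ = _ := by ring
  have hasSum_exp : ∀ y, HasSum (fun n => (n !⁻¹ : 𝕂) • τ (y ^ n)) (τ (exp y)) := fun y => by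
    simpa using τ.hasSum (exp_series_hasSum_exp' (𝕂 := 𝕂) y)
  have := hasFDerivAt_tsum_of_isPreconnected
    ((Real.summable_natCast_mul_pow_pred_div_factorial r).mul_left ‖τ‖) Metric.isOpen_ball
    (convex_ball 0 r).isPreconnected term bound hx (hasSum_exp x).summable hx
  rw [(τ.compMul.hasSum (exp_series_deriv_hasSum_exp x)).tsum_eq] at this
  simpa only [fun y => (hasSum_exp y).tsum_eq] using this

attribute [local instance] Matrix.linftyOpNormedRing Matrix.linftyOpNormedAlgebra

/-- For any `m × m` complex matrices `A` and `B`, the function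
`t ↦ tr (exp (A + t • B))` from `ℝ` to `ℂ` has derivative `tr (exp A · B)` at `t = 0`. -/
theorem hasDerivAt_trace_exp {m : ℕ} (A B : Matrix (Fin m) (Fin m) ℂ) :
    HasDerivAt (fun t : ℝ => (exp (A + t • B)).trace)
      ((exp A * B).trace) 0 := by
  let τ : Matrix (Fin m) (Fin m) ℂ →L[ℝ] ℂ :=
    LinearMap.toContinuousLinearMap (Matrix.traceLinearMap (Fin m) ℝ ℂ)
  have h := (τ.hasFDerivAt_exp_of_cyclic Matrix.trace_mul_comm A).comp_hasDerivAt_of_eq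
    (0 : ℝ) (((hasDerivAt_id 0).smul_const B).const_add A) (by simp)
  rw [one_smul] at h
  exact h
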